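/- Let A be symmetric positive definite with smallest eigenvalue λ_min and β̂(α) = (A + αI)⁻¹(b + αβ^p). Then for all α ≥ 0, ‖β̂(α) − β^p‖ ≤ ‖A⁻¹b − β^p‖ · λ_max / (λ_max + α) · (λ_max/λ_min), and in particular ‖β̂(α) − β^p‖ ≤ (λ_max/λ_min) ‖A⁻¹b − β^p‖, so the path is uniformly bounded in α. -/
import Mathlib

open Matrix

/-- Euclidean norm on `ℝ^k`. -/
noncomputable def euclNorm {k : ℕ} (x : Fin k → ℝ) : ℝ :=
  Real.sqrt (∑ i, x i ^ 2)

lemma euclNorm_nonneg' {k : ℕ} (x : Fin k → ℝ) : 0 ≤ euclNorm x := Real.sqrt_nonneg _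

lemma sum_sq_eq_dot {k : ℕ} (v : Fin k → ℝ) : ∑ i, v i ^ 2 = v ⬝ᵥ v := by
  simp [dotProduct, sq]

lemma euclNorm_mulVec_orth {k : ℕ} (C : Matrix (Fin k) (Fin k) ℝ)
    (hC : Cᵀ * C = 1) (y : Fin k → ℝ) : euclNorm (C.mulVec y) = euclNorm y := by
  unfold euclNorm
  congr 1
  rw [sum_sq_eq_dot, sum_sq_eq_dot, dotProduct_mulVec, ← mulVec_transpose,
    mulVec_mulVec, hC, one_mulVec]

lemma euclNorm_mul_le {k : ℕ} (g y : Fin k → ℝ) (M : ℝ) (hM : 0 ≤ M)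
    (h : ∀ i, |g i| ≤ M) : euclNorm (fun i => g i * y i) ≤ M * euclNorm y := by
  unfold euclNorm
  rw [show M * Real.sqrt (∑ i, y i ^ 2) = Real.sqrt (M ^ 2 * ∑ i, y i ^ 2) by
    rw [Real.sqrt_mul (by positivity), Real.sqrt_sq hM]]
  apply Real.sqrt_le_sqrt
  rw [Finset.mul_sum]
  apply Finset.sum_le_sum
  intro i _
  rw [mul_pow]
  have h1 : g i ^ 2 ≤ M ^ 2 := by
    rw [← sq_abs]; exact pow_le_pow_left₀ (abs_nonneg _) (h i) 2
  nlinarith [sq_nonneg (y i)]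

lemma inv_conj {k : ℕ} (C : Matrix (Fin k) (Fin k) ℝ) (hC : Cᵀ * C = 1)
    (d : Fin k → ℝ) (hd : ∀ i, d i ≠ 0) :
    (C * Matrix.diagonal d * Cᵀ)⁻¹ = C * Matrix.diagonal (fun i => (d i)⁻¹) * Cᵀ := by
  apply Matrix.inv_eq_right_inv
  have hCCt : C * Cᵀ = 1 := mul_eq_one_comm.mp hC
  have h1 : C * Matrix.diagonal d * Cᵀ * (C * Matrix.diagonal (fun i => (d i)⁻¹) * Cᵀ)
      = C * (Matrix.diagonal d * (Cᵀ * C) * Matrix.diagonal (fun i => (d i)⁻¹)) * Cᵀ := by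
    simp only [Matrix.mul_assoc]
  have h2 : Matrix.diagonal (fun i => d i * (d i)⁻¹) = (1 : Matrix (Fin k) (Fin k) ℝ) := by
    rw [show (fun i => d i * (d i)⁻¹) = fun _ => (1:ℝ) from funext fun i => mul_inv_cancel₀ (hd i)]
    exact Matrix.diagonal_one
  rw [h1, hC, Matrix.mul_one, Matrix.diagonal_mul_diagonal, h2, Matrix.mul_one, hCCt]

lemma conj_mulVec {k : ℕ} (C : Matrix (Fin k) (Fin k) ℝ) (d : Fin k → ℝ) (v : Fin k → ℝ) :
    (C * Matrix.diagonal d * Cᵀ).mulVec v = C.mulVec (fun i => d i * (Cᵀ.mulVec v) i) := by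
  have h : (Matrix.diagonal d).mulVec (Cᵀ.mulVec v) = fun i => d i * (Cᵀ.mulVec v) i := by
    ext i; rw [Matrix.mulVec_diagonal]
  rw [← Matrix.mulVec_mulVec, ← Matrix.mulVec_mulVec, h]

lemma smul_one_diag {k : ℕ} (α : ℝ) :
    α • (1 : Matrix (Fin k) (Fin k) ℝ) = Matrix.diagonal (fun _ => α) := by
  ext i j
  by_cases h : i = j <;> simp [Matrix.diagonal, Matrix.one_apply, h]

/-- For `A = C Λ Cᵀ` symmetric positive definite with eigenvalues in
`[λ_min, λ_max] ⊂ (0, ∞)`, the ridge path `β̂(α) = (A + αI)⁻¹(b + αβ^p)`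
satisfies, for all `α ≥ 0`,
`‖β̂(α) − β^p‖ ≤ ‖A⁻¹b − β^p‖ · (λ_max/(λ_max + α)) · (λ_max/λ_min)` and in
particular `‖β̂(α) − β^p‖ ≤ (λ_max/λ_min) ‖A⁻¹b − β^p‖`, so the path is
uniformly bounded in `α`. -/
theorem stmt_19 {k : ℕ} (C Λ : Matrix (Fin k) (Fin k) ℝ)
    (lam : Fin k → ℝ) (hΛ : Λ = Matrix.diagonal lam)
    (lamMin lamMax : ℝ) (hmin : 0 < lamMin)
    (hbound : ∀ i, lamMin ≤ lam i ∧ lam i ≤ lamMax)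
    (hC : Cᵀ * C = 1) (A : Matrix (Fin k) (Fin k) ℝ) (hA : A = C * Λ * Cᵀ)
    (b βp : Fin k → ℝ) :
    ∀ α : ℝ, 0 ≤ α →
      euclNorm ((A + α • (1 : Matrix (Fin k) (Fin k) ℝ))⁻¹.mulVec (b + α • βp) - βp)
          ≤ euclNorm (A⁻¹.mulVec b - βp) * (lamMax / (lamMax + α)) * (lamMax / lamMin) ∧
        euclNorm ((A + α • (1 : Matrix (Fin k) (Fin k) ℝ))⁻¹.mulVec (b + α • βp) - βp)
          ≤ (lamMax / lamMin) * euclNorm (A⁻¹.mulVec b - βp) := by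
  intro α hα
  rcases Nat.eq_zero_or_pos k with hk | hk
  · subst hk
    simp [euclNorm]
  have i0 : Fin k := ⟨0, hk⟩
  have hmm : lamMin ≤ lamMax := le_trans (hbound i0).1 (hbound i0).2
  have hmaxpos : 0 < lamMax := lt_of_lt_of_le hmin hmm
  have hmaxα : 0 < lamMax + α := by linarith
  have hlampos : ∀ i, 0 < lam i := fun i => lt_of_lt_of_le hmin (hbound i).1
  have hlamne : ∀ i, lam i ≠ 0 := fun i => (hlampos i).ne'
  have hlamαpos : ∀ i, 0 < lam i + α := fun i => by linarith [hlampos i]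
  have hlamαne : ∀ i, lam i + α ≠ 0 := fun i => (hlamαpos i).ne'
  set u := Cᵀ.mulVec b with hu
  set w := Cᵀ.mulVec βp with hw
  have hCCt : C * Cᵀ = 1 := mul_eq_one_comm.mp hC
  have hβp : βp = C.mulVec w := by
    rw [hw, Matrix.mulVec_mulVec, hCCt, Matrix.one_mulVec]
  have hAinv : A⁻¹ = C * Matrix.diagonal (fun i => (lam i)⁻¹) * Cᵀ := by
    rw [hA, hΛ]; exact inv_conj C hC lam hlamne
  have hdiagsum : Matrix.diagonal (fun i => lam i + α)
      = Matrix.diagonal lam + α • (1 : Matrix (Fin k) (Fin k) ℝ) := by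
    rw [smul_one_diag, Matrix.diagonal_add]
  have hAα : A + α • (1 : Matrix (Fin k) (Fin k) ℝ)
      = C * Matrix.diagonal (fun i => lam i + α) * Cᵀ := by
    rw [hdiagsum, Matrix.mul_add, Matrix.add_mul, hA, hΛ]
    congr 1
    rw [Matrix.mul_smul, Matrix.mul_one, Matrix.smul_mul, hCCt]
  have hAαinv : (A + α • (1 : Matrix (Fin k) (Fin k) ℝ))⁻¹
      = C * Matrix.diagonal (fun i => (lam i + α)⁻¹) * Cᵀ := by
    rw [hAα]; exact inv_conj C hC _ hlamαne
  set y : Fin k → ℝ := fun i => (lam i)⁻¹ * u i - w i with hy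
  have hX : A⁻¹.mulVec b - βp = C.mulVec y := by
    rw [hAinv, conj_mulVec]
    conv_lhs => rw [hβp]
    rw [← Matrix.mulVec_sub]
    rfl
  have hL : (A + α • (1 : Matrix (Fin k) (Fin k) ℝ))⁻¹.mulVec (b + α • βp) - βp
      = C.mulVec (fun i => (lam i / (lam i + α)) * y i) := by
    rw [hAαinv, conj_mulVec]
    have h1 : Cᵀ.mulVec (b + α • βp) = fun i => u i + α * w i := by
      rw [Matrix.mulVec_add, Matrix.mulVec_smul]
      rfl
    rw [h1]
    conv_lhs => rw [hβp]
    rw [← Matrix.mulVec_sub]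
    apply congrArg
    funext i
    rw [Pi.sub_apply]
    have h2 := hlamαne i
    have h3 := hlamne i
    show (lam i + α)⁻¹ * (u i + α * w i) - w i = lam i / (lam i + α) * ((lam i)⁻¹ * u i - w i)
    field_simp
    ring
  set M := lamMax / (lamMax + α) with hM
  have hMnn : 0 ≤ M := div_nonneg hmaxpos.le hmaxα.le
  have hg : ∀ i, |lam i / (lam i + α)| ≤ M := by
    intro i
    rw [abs_of_nonneg (div_nonneg (hlampos i).le (hlamαpos i).le), hM,
      div_le_div_iff₀ (hlamαpos i) hmaxα]
    nlinarith [(hbound i).2, hlampos i]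
  have key : euclNorm ((A + α • (1 : Matrix (Fin k) (Fin k) ℝ))⁻¹.mulVec (b + α • βp) - βp)
      ≤ M * euclNorm (A⁻¹.mulVec b - βp) := by
    rw [hL, euclNorm_mulVec_orth C hC, hX, euclNorm_mulVec_orth C hC]
    exact euclNorm_mul_le _ _ M hMnn hg
  have hratio : 1 ≤ lamMax / lamMin := (one_le_div hmin).mpr hmm
  have hNnn : 0 ≤ euclNorm (A⁻¹.mulVec b - βp) := euclNorm_nonneg' _
  constructor
  · calc euclNorm ((A + α • (1 : Matrix (Fin k) (Fin k) ℝ))⁻¹.mulVec (b + α • βp) - βp)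
        ≤ M * euclNorm (A⁻¹.mulVec b - βp) := key
      _ = euclNorm (A⁻¹.mulVec b - βp) * M * 1 := by ring
      _ ≤ euclNorm (A⁻¹.mulVec b - βp) * M * (lamMax / lamMin) := by
          apply mul_le_mul_of_nonneg_left hratio (by positivity)
  · have hM1 : M ≤ 1 := by rw [hM, div_le_one hmaxα]; linarith
    calc euclNorm ((A + α • (1 : Matrix (Fin k) (Fin k) ℝ))⁻¹.mulVec (b + α • βp) - βp)
        ≤ M * euclNorm (A⁻¹.mulVec b - βp) := key
      _ ≤ 1 * euclNorm (A⁻¹.mulVec b - βp) := mul_le_mul_of_nonneg_right hM1 hNnn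
      _ = 1 * (1 * euclNorm (A⁻¹.mulVec b - βp)) := by ring
      _ ≤ (lamMax / lamMin) * euclNorm (A⁻¹.mulVec b - βp) := by
          rw [one_mul]
          exact mul_le_mul_of_nonneg_right hratio hNnn
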